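/- Every subsequence (n_k) of ℕ admits a further subsequence (n_{k_j}) such that, almost surely, σ_∞ = lim_{r→∞} liminf_{j→∞} ρ_{n_{k_j}}^{(r)}. -/

import Mathlib

/-!
Along a subsequence chosen by a diagonal Borel–Cantelli argument, the uniform distances
`sup_{[0,T]} ‖X_n^{(R+1)} - X_∞^{(R+1)}‖` tend to `0` almost surely for every level `R` at once,
and the localization (a) holds for all levels. The statement is then pathwise. If `‖X_∞‖ ≤ C` on
`[0, s]` with `s < σ_∞`, then at a level `L > C + 1` the uniformly close paths `X_n^{(L)}` stay
below `L` on `[0, s]`; since `X_n` reaches norm `L` at its exit time, that time is at least `s`.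
Conversely, if `σ_∞ < T`, explosion gives `t < σ_∞` with `‖X_∞(t)‖ > r`; then `X_n^{(L)}(t)`, hence
`X_n(t)`, exceeds `r` for large `n`, so the exit times at level `r` are eventually `≤ t`.
-/

open MeasureTheory Filter Set Topology ENNReal

namespace MeasureTheory

theorem TendstoInMeasure.exists_seq_forall_tendsto_ae {α E : Type*} [MeasurableSpace α]
    {μ : Measure α} [PseudoEMetricSpace E] {f : ℕ → ℕ → α → E} {g : ℕ → α → E}
    (hfg : ∀ R, TendstoInMeasure μ (f R) atTop (g R)) :
    ∃ ns : ℕ → ℕ, StrictMono ns ∧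
      ∀ᵐ x ∂μ, ∀ R, Tendsto (fun j => f R (ns j) x) atTop (𝓝 (g R x)) := by
  set ε : ℕ → ℝ≥0∞ := fun j => 2⁻¹ ^ j
  have hε_pos : ∀ j, 0 < ε j := fun j => ENNReal.pow_pos (by simp) j
  have hε_anti : Antitone ε := fun i j hij => pow_le_pow_right_of_le_one' (by norm_num) hij
  have hε_lim : Tendsto ε atTop (𝓝 0) :=
    ENNReal.tendsto_pow_atTop_nhds_zero_of_lt_one (by norm_num)
  have hε_sum : ∑' j, ε j ≠ ∞ := by simp [ε, ENNReal.tsum_geometric, ENNReal.one_sub_inv_two]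
  have hsmall : ∀ j, ∀ᶠ m in atTop, ∀ R ∈ Iic j,
      μ {x | ε j ≤ edist (f R m x) (g R x)} ≤ ε j := fun j =>
    (eventually_all_finite (finite_Iic j)).2 fun R _ =>
      (hfg R (ε j) (hε_pos j)).eventually (ge_mem_nhds (hε_pos j))
  obtain ⟨ns, hns, hμ⟩ := extraction_forall_of_eventually hsmall
  refine ⟨ns, hns, ae_all_iff.2 fun R => ?_⟩
  -- Borel–Cantelli along the tail `j ≥ R`, where the bound of `hμ` applies to `R`.
  have hsum : ∑' j, μ {x | ε (j + R) ≤ edist (f R (ns (j + R)) x) (g R x)} ≠ ∞ :=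
    ne_top_of_le_ne_top hε_sum <| ENNReal.tsum_le_tsum fun j =>
      (hμ (j + R) R (by simp)).trans (hε_anti (Nat.le_add_right j R))
  filter_upwards [ae_eventually_notMem hsum] with x hx
  rw [← tendsto_add_atTop_iff_nat R, tendsto_iff_edist_tendsto_0]
  refine tendsto_of_tendsto_of_tendsto_of_le_of_le' tendsto_const_nhds
    (hε_lim.comp (tendsto_add_atTop_nat R)) (Eventually.of_forall fun _ => zero_le) ?_
  filter_upwards [hx] with j hj
  exact (not_le.1 hj).le

end MeasureTheory

theorem tendstoUniformlyOn_of_tendsto_iSup_norm_sub {ι β F : Type*} [TopologicalSpace β]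
    [SeminormedAddCommGroup F] {f : ι → β → F} {g : β → F} {l : Filter ι} {s : Set β}
    (hs : IsCompact s) (hf : ∀ i, ContinuousOn (f i) s) (hg : ContinuousOn g s)
    (h : Tendsto (fun i => ⨆ t : s, ‖f i t - g t‖) l (𝓝 0)) :
    TendstoUniformlyOn f g l s := by
  refine Metric.tendstoUniformlyOn_iff.2 fun ε hε => ?_
  filter_upwards [h.eventually (gt_mem_nhds hε)] with i hi t ht
  have hbdd : BddAbove (range fun t : s => ‖f i t - g t‖) := by
    have := hs.bddAbove_image (f := fun t => ‖f i t - g t‖) ((hf i).sub hg).norm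
    rwa [image_eq_range] at this
  calc dist (g t) (f i t) = ‖f i t - g t‖ := by rw [dist_comm, dist_eq_norm]
    _ ≤ ⨆ t : s, ‖f i t - g t‖ := le_ciSup hbdd ⟨t, ht⟩
    _ < ε := hi

section ExitTime

variable {E : Type*} [SeminormedAddCommGroup E]

/-- The point `T` is added to the set so that `inf ∅ = T`. -/
noncomputable def exitTime (x : ℝ → E) (σ T r : ℝ) : ℝ :=
  sInf ({t | t ∈ Ioo 0 σ ∧ r < ‖x t‖} ∪ {T})

def IsExplosionTime (x : ℝ → E) (σ T : ℝ) : Prop :=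
  σ < T → ∀ M : ℝ, ∃ᶠ t in 𝓝[<] σ, M < ‖x t‖

variable {x y z : ℝ → E} {σ T r s t C δ : ℝ}

theorem bddBelow_exitTime_set : BddBelow ({t | t ∈ Ioo 0 σ ∧ r < ‖x t‖} ∪ {T}) :=
  ⟨min 0 T, by rintro t (ht | rfl); exacts [(min_le_left _ _).trans ht.1.1.le, min_le_right _ _]⟩

theorem exitTime_le_of_mem (ht : t ∈ Ioo 0 σ) (hr : r < ‖x t‖) : exitTime x σ T r ≤ t :=
  csInf_le bddBelow_exitTime_set (Or.inl ⟨ht, hr⟩)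

theorem exitTime_le_right : exitTime x σ T r ≤ T :=
  csInf_le bddBelow_exitTime_set (Or.inr rfl)

theorem exitTime_nonneg (hT : 0 ≤ T) : 0 ≤ exitTime x σ T r :=
  le_csInf ⟨T, Or.inr rfl⟩ (by rintro t (ht | rfl); exacts [ht.1.1.le, hT])

theorem le_exitTime (hsT : s ≤ T) (hx : ∀ t ∈ Icc 0 s, ‖x t‖ ≤ r) : s ≤ exitTime x σ T r := by
  refine le_csInf ⟨T, Or.inr rfl⟩ ?_
  rintro t (⟨ht, hr⟩ | rfl)
  · by_contra! hts
    exact (hx t ⟨ht.1.le, hts.le⟩).not_gt hr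
  · exact hsT

theorem monotone_exitTime : Monotone (exitTime x σ T) := fun _ _ hrr' =>
  csInf_le_csInf bddBelow_exitTime_set ⟨T, Or.inr rfl⟩ <|
    union_subset_union_left _ fun _ ht => ⟨ht.1, hrr'.trans_lt ht.2⟩

theorem exists_mem_Ioo_lt_norm (hσ : 0 < σ) (h : ∃ᶠ t in 𝓝[<] σ, r < ‖x t‖) :
    ∃ t ∈ Ioo 0 σ, r < ‖x t‖ :=
  (h.and_eventually (Ioo_mem_nhdsLT hσ)).exists.imp fun _ ht => ⟨ht.2, ht.1⟩

theorem IsExplosionTime.exitTime_le (hx : IsExplosionTime x σ T) (hσ : 0 < σ) (hσT : σ ≤ T) :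
    exitTime x σ T r ≤ σ := by
  rcases hσT.lt_or_eq with hσT | rfl
  · obtain ⟨t, ht, hrt⟩ := exists_mem_Ioo_lt_norm hσ (hx hσT r)
    exact (exitTime_le_of_mem ht hrt).trans ht.2.le
  · exact exitTime_le_right

theorem exitTime_mem_closure (h : exitTime x σ T r < T) :
    exitTime x σ T r ∈ closure {t | t ∈ Ioo 0 σ ∧ r < ‖x t‖} := by
  have hmem := csInf_mem_closure ⟨T, Or.inr rfl⟩ (bddBelow_exitTime_set (x := x) (σ := σ) (r := r))
  rw [closure_union, closure_singleton] at hmem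
  exact hmem.resolve_right h.ne

theorem exitTime_mem_Ico (h : exitTime x σ T r < T) : exitTime x σ T r ∈ Ico 0 σ := by
  have hcl := exitTime_mem_closure h
  obtain ⟨t, ht, hrt⟩ : {t | t ∈ Ioo 0 σ ∧ r < ‖x t‖}.Nonempty :=
    closure_nonempty_iff.1 ⟨_, hcl⟩
  exact ⟨closure_minimal (fun t ht => ht.1.1.le) isClosed_Ici hcl,
    (exitTime_le_of_mem ht hrt).trans_lt ht.2⟩

theorem le_norm_exitTime (hx : ContinuousOn x (Ico 0 σ)) (h : exitTime x σ T r < T) :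
    r ≤ ‖x (exitTime x σ T r)‖ :=
  ContinuousWithinAt.closure_le (exitTime_mem_closure h) continuousWithinAt_const
    ((hx _ (exitTime_mem_Ico h)).mono fun _ ht => Ioo_subset_Ico_self ht.1).norm
    fun _ ht => ht.2.le

theorem exitTime_le_of_lt_norm {L : ℝ} (hx : IsExplosionTime x σ T) (hσ : 0 < σ) (hσT : σ ≤ T)
    (hyx : ∀ t ∈ Icc 0 (exitTime x σ T L), y t = x t) (hrL : r ≤ L) (ht : 0 < t)
    (hyt : r < ‖y t‖) : exitTime x σ T r ≤ t := by
  by_contra! hlt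
  have htσ : t < σ := hlt.trans_le (hx.exitTime_le hσ hσT)
  rw [hyx t ⟨ht.le, hlt.le.trans (monotone_exitTime hrL)⟩] at hyt
  exact (exitTime_le_of_mem ⟨ht, htσ⟩ hyt).not_gt hlt

theorem le_exitTime_of_dist_le (hx : ContinuousOn x (Ico 0 σ))
    (hyx : ∀ t ∈ Icc 0 (exitTime x σ T r), y t = x t) (hsT : s ≤ T)
    (hz : ∀ t ∈ Icc 0 s, ‖z t‖ ≤ C) (hyz : ∀ t ∈ Icc 0 s, dist (y t) (z t) ≤ δ)
    (hr : C + δ < r) : s ≤ exitTime x σ T r := by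
  by_contra! hlt
  set τ := exitTime x σ T r
  have hτT : τ < T := hlt.trans_le hsT
  have hτ : τ ∈ Icc 0 s := ⟨(exitTime_mem_Ico hτT).1, hlt.le⟩
  have hyτ : ‖y τ‖ ≤ ‖z τ‖ + dist (y τ) (z τ) := by
    rw [dist_eq_norm]; exact norm_le_norm_add_norm_sub' _ _
  refine lt_irrefl r ?_
  calc
    r ≤ ‖x τ‖ := le_norm_exitTime hx hτT
    _ = ‖y τ‖ := by rw [hyx τ ⟨hτ.1, le_rfl⟩]
    _ ≤ C + δ := hyτ.trans (add_le_add (hz τ hτ) (hyz τ hτ))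
    _ < r := hr

end ExitTime

section PathwiseConvergence

variable {E : Type*} [SeminormedAddCommGroup E] {T : ℝ}
  {x : ℕ → ℝ → E} {σ : ℕ → ℝ} {y : ℕ → ℕ → ℝ → E}
  {xi : ℝ → E} {σi : ℝ} {yi : ℕ → ℝ → E} {L : ℕ → ℝ}

structure LocalizedApproximation (x : ℕ → ℝ → E) (σ : ℕ → ℝ) (y : ℕ → ℕ → ℝ → E)
    (xi : ℝ → E) (σi : ℝ) (yi : ℕ → ℝ → E) (L : ℕ → ℝ) (T : ℝ) : Prop where
  eqOn : ∀ m R, ∀ t ∈ Icc 0 (exitTime (x m) (σ m) T (L R)), y m R t = x m t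
  eqOn_limit : ∀ R, ∀ t ∈ Icc 0 (exitTime xi σi T (L R)), yi R t = xi t
  tendsto_levels : Tendsto L atTop atTop
  tendstoUniformlyOn : ∀ R, TendstoUniformlyOn (fun m => y m R) (yi R) atTop (Icc 0 T)

namespace LocalizedApproximation

theorem liminf_exitTime_le (h : LocalizedApproximation x σ y xi σi yi L T)
    (hσ : ∀ m, σ m ∈ Ioc 0 T) (hx : ∀ m, IsExplosionTime (x m) (σ m) T)
    (hσi : σi ∈ Ioc 0 T) (hxi : IsExplosionTime xi σi T) (hxci : ContinuousOn xi (Ico 0 σi))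
    (r : ℝ) : liminf (fun m => exitTime (x m) (σ m) T r) atTop ≤ σi := by
  have hbdd : IsBoundedUnder (· ≥ ·) atTop (fun m => exitTime (x m) (σ m) T r) :=
    isBoundedUnder_of ⟨0, fun m => exitTime_nonneg (hσi.1.le.trans hσi.2)⟩
  rcases hσi.2.lt_or_eq with hσiT | rfl
  · obtain ⟨t, ht, hrt⟩ := exists_mem_Ioo_lt_norm hσi.1 (hxi hσiT r)
    obtain ⟨C, hC⟩ :=
      isCompact_Icc.exists_bound_of_continuousOn (hxci.mono (Icc_subset_Ico_right ht.2))
    obtain ⟨R, hR⟩ := (h.tendsto_levels.eventually_ge_atTop (max C r)).exists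
    have hyit : yi R t = xi t := h.eqOn_limit R t ⟨ht.1.le, le_exitTime (ht.2.le.trans hσi.2)
      fun s hs => (hC s hs).trans ((le_max_left C r).trans hR)⟩
    have hev : ∀ᶠ m in atTop, exitTime (x m) (σ m) T r ≤ t := by
      filter_upwards [Metric.tendstoUniformlyOn_iff.1 (h.tendstoUniformlyOn R) _ (sub_pos.2 hrt)]
        with m hm
      refine exitTime_le_of_lt_norm (hx m) (hσ m).1 (hσ m).2 (h.eqOn m R)
        ((le_max_right C r).trans hR) ht.1 ?_
      have hdist := hm t ⟨ht.1.le, ht.2.le.trans hσi.2⟩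
      rw [hyit, dist_eq_norm] at hdist
      linarith [norm_sub_norm_le (xi t) (y m R t)]
    exact (liminf_le_of_frequently_le hev.frequently hbdd).trans ht.2.le
  · exact liminf_le_of_frequently_le (Frequently.of_forall fun _ => exitTime_le_right) hbdd

theorem eventually_le_liminf_exitTime (h : LocalizedApproximation x σ y xi σi yi L T)
    (hxc : ∀ m, ContinuousOn (x m) (Ico 0 (σ m))) (hσi : σi ≤ T)
    (hxci : ContinuousOn xi (Ico 0 σi)) {s : ℝ} (hs : s < σi) :
    ∀ᶠ r in atTop, s ≤ liminf (fun m => exitTime (x m) (σ m) T r) atTop := by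
  have hsT : s ≤ T := hs.le.trans hσi
  obtain ⟨C, hC⟩ :=
    isCompact_Icc.exists_bound_of_continuousOn (hxci.mono (Icc_subset_Ico_right hs))
  obtain ⟨R, hR⟩ := (h.tendsto_levels.eventually_gt_atTop (C + 1)).exists
  have hyiC : ∀ t ∈ Icc 0 s, ‖yi R t‖ ≤ C := fun t ht => by
    rw [h.eqOn_limit R t ⟨ht.1, ht.2.trans (le_exitTime hsT fun u hu => (hC u hu).trans
      (by linarith))⟩]
    exact hC t ht
  have hev : ∀ᶠ m in atTop, s ≤ exitTime (x m) (σ m) T (L R) := by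
    filter_upwards [Metric.tendstoUniformlyOn_iff.1 (h.tendstoUniformlyOn R) 1 one_pos] with m hm
    exact le_exitTime_of_dist_le (hxc m) (h.eqOn m R) hsT hyiC
      (fun t ht => by rw [dist_comm]; exact (hm t ⟨ht.1, ht.2.trans hsT⟩).le) hR
  filter_upwards [eventually_ge_atTop (L R)] with r hr
  refine le_liminf_of_le (isBoundedUnder_of ⟨T, fun _ => exitTime_le_right⟩).isCoboundedUnder_ge ?_
  exact hev.mono fun m hm => hm.trans (monotone_exitTime hr)

theorem tendsto_liminf_exitTime (h : LocalizedApproximation x σ y xi σi yi L T)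
    (hσ : ∀ m, σ m ∈ Ioc 0 T) (hx : ∀ m, IsExplosionTime (x m) (σ m) T)
    (hxc : ∀ m, ContinuousOn (x m) (Ico 0 (σ m)))
    (hσi : σi ∈ Ioc 0 T) (hxi : IsExplosionTime xi σi T) (hxci : ContinuousOn xi (Ico 0 σi)) :
    Tendsto (fun r => liminf (fun m => exitTime (x m) (σ m) T r) atTop) atTop (𝓝 σi) := by
  refine tendsto_order.2 ⟨fun a ha => ?_, fun a ha => ?_⟩
  · obtain ⟨s, has, hs⟩ := exists_between ha
    exact (h.eventually_le_liminf_exitTime hxc hσi.2 hxci hs).mono fun r hr => has.trans_le hr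
  · exact Eventually.of_forall fun r =>
      (h.liminf_exitTime_le hσ hx hσi hxi hxci r).trans_lt ha

end LocalizedApproximation

end PathwiseConvergence

theorem stmt_6_general
    {Ω : Type*} [MeasurableSpace Ω] (P : Measure Ω)
    {E : Type*} [NormedAddCommGroup E]
    (T : ℝ)
    -- the explosion times σ_n (n ∈ ℕ) and σ_∞
    (σ : ℕ → Ω → ℝ) (σi : Ω → ℝ)
    (hσmem : ∀ n ω, σ n ω ∈ Set.Ioc 0 T) (hσimem : ∀ ω, σi ω ∈ Set.Ioc 0 T)
    -- the processes X_n (n ∈ ℕ) and X_∞, jointly measurable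
    (X : ℕ → ℝ → Ω → E) (Xi : ℝ → Ω → E)
    -- path continuity on [0, σ_n(ω)), and on [0,T] if σ_n(ω) = T
    (hXcont : ∀ n ω, ContinuousOn (fun t => X n t ω) (Set.Ico 0 (σ n ω)))
    (hXicont : ∀ ω, ContinuousOn (fun t => Xi t ω) (Set.Ico 0 (σi ω)))
    -- σ_n is an explosion time: on {σ_n < T}, limsup_{t ↑ σ_n} ‖X_n(t)‖ = ∞
    (hexpl : ∀ n ω, σ n ω < T →
      ∀ M : ℝ, ∃ᶠ t in nhdsWithin (σ n ω) (Set.Iio (σ n ω)), M < ‖X n t ω‖)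
    (hexpli : ∀ ω, σi ω < T →
      ∀ M : ℝ, ∃ᶠ t in nhdsWithin (σi ω) (Set.Iio (σi ω)), M < ‖Xi t ω‖)
    -- the stopping times ρ_n^{(r)} = inf { t ∈ (0, σ_n) : ‖X_n(t)‖ > r }, inf ∅ := T
    (ρ : ℕ → ℝ → Ω → ℝ) (ρi : ℝ → Ω → ℝ)
    (hρ : ∀ n r ω, ρ n r ω = sInf ({t : ℝ | t ∈ Set.Ioo 0 (σ n ω) ∧ r < ‖X n t ω‖} ∪ {T}))
    (hρi : ∀ r ω, ρi r ω = sInf ({t : ℝ | t ∈ Set.Ioo 0 (σi ω) ∧ r < ‖Xi t ω‖} ∪ {T}))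
    -- the globally defined processes X_n^{(r)} (denoted Y n r) and X_∞^{(r)} (denoted Yi r)
    (Y : ℕ → ℝ → ℝ → Ω → E) (Yi : ℝ → ℝ → Ω → E)
    (hYcont : ∀ n r ω, Continuous fun t => Y n r t ω)
    (hYicont : ∀ r ω, Continuous fun t => Yi r t ω)
    -- assumption (a)
    (ha : ∀ n r, 0 < r → ∀ᵐ ω ∂P, ∀ t ∈ Set.Icc 0 (ρ n r ω), Y n r t ω = X n t ω)
    (hai : ∀ r, 0 < r → ∀ᵐ ω ∂P, ∀ t ∈ Set.Icc 0 (ρi r ω), Yi r t ω = Xi t ω)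
    -- assumption (b): X_n^{(r)} → X_∞^{(r)} in L⁰(Ω; C([0,T]; E))
    (hb : ∀ r, 0 < r → TendstoInMeasure P
      (fun n ω => ⨆ t : Set.Icc (0:ℝ) T, ‖Y n r (t : ℝ) ω - Yi r (t : ℝ) ω‖)
      atTop (fun _ => (0 : ℝ)))    :
    ∀ n : ℕ → ℕ, StrictMono n → ∃ k : ℕ → ℕ, StrictMono k ∧ ∀ᵐ ω ∂P,
      Tendsto (fun r : ℝ => liminf (fun j => ρ (n (k j)) r ω) atTop) atTop (nhds (σi ω)) := by
  obtain rfl : ρ = fun m r ω => exitTime (fun t => X m t ω) (σ m ω) T r := by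
    funext m r ω; exact hρ m r ω
  obtain rfl : ρi = fun r ω => exitTime (fun t => Xi t ω) (σi ω) T r := by
    funext r ω; exact hρi r ω
  intro n hn
  -- Localize at the countably many levels `R + 1`.
  obtain ⟨k, hk, hconv⟩ := TendstoInMeasure.exists_seq_forall_tendsto_ae fun R : ℕ =>
    (hb _ R.cast_add_one_pos).comp hn.tendsto_atTop
  refine ⟨k, hk, ?_⟩
  filter_upwards [hconv, ae_all_iff.2 fun m => ae_all_iff.2 fun R : ℕ => ha m _ R.cast_add_one_pos,
    ae_all_iff.2 fun R : ℕ => hai _ R.cast_add_one_pos] with ω hω hYX hYXi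
  have happrox : LocalizedApproximation (fun j t => X (n (k j)) t ω) (fun j => σ (n (k j)) ω)
      (fun j R t => Y (n (k j)) (R + 1) t ω) (fun t => Xi t ω) (σi ω)
      (fun R t => Yi (R + 1) t ω) (fun R : ℕ => (R : ℝ) + 1) T :=
    { eqOn := fun j R => hYX (n (k j)) R
      eqOn_limit := hYXi
      tendsto_levels := tendsto_atTop_add_const_right _ 1 tendsto_natCast_atTop_atTop
      tendstoUniformlyOn := fun R => tendstoUniformlyOn_of_tendsto_iSup_norm_sub isCompact_Icc
        (fun j => (hYcont _ _ ω).continuousOn) (hYicont _ ω).continuousOn (hω R) }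
  exact happrox.tendsto_liminf_exitTime (fun j => hσmem _ ω) (fun j => hexpl _ ω)
    (fun j => hXcont _ ω) (hσimem ω) (hexpli ω) (hXicont ω)

theorem stmt_6
    {Ω : Type*} [MeasurableSpace Ω] (P : Measure Ω) [IsProbabilityMeasure P]
    {E : Type*} [NormedAddCommGroup E] [NormedSpace ℝ E] [CompleteSpace E]
    [MeasurableSpace E] [BorelSpace E]
    (T : ℝ) (hT : 0 < T)
    -- the explosion times σ_n (n ∈ ℕ) and σ_∞
    (σ : ℕ → Ω → ℝ) (σi : Ω → ℝ)
    (hσmeas : ∀ n, Measurable (σ n)) (hσimeas : Measurable σi)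
    (hσmem : ∀ n ω, σ n ω ∈ Set.Ioc 0 T) (hσimem : ∀ ω, σi ω ∈ Set.Ioc 0 T)
    -- the processes X_n (n ∈ ℕ) and X_∞, jointly measurable
    (X : ℕ → ℝ → Ω → E) (Xi : ℝ → Ω → E)
    (hXmeas : ∀ n, Measurable fun p : ℝ × Ω => X n p.1 p.2)
    (hXimeas : Measurable fun p : ℝ × Ω => Xi p.1 p.2)
    -- path continuity on [0, σ_n(ω)), and on [0,T] if σ_n(ω) = T
    (hXcont : ∀ n ω, ContinuousOn (fun t => X n t ω) (Set.Ico 0 (σ n ω)))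
    (hXcontT : ∀ n ω, σ n ω = T → ContinuousOn (fun t => X n t ω) (Set.Icc 0 T))
    (hXicont : ∀ ω, ContinuousOn (fun t => Xi t ω) (Set.Ico 0 (σi ω)))
    (hXicontT : ∀ ω, σi ω = T → ContinuousOn (fun t => Xi t ω) (Set.Icc 0 T))
    -- σ_n is an explosion time: on {σ_n < T}, limsup_{t ↑ σ_n} ‖X_n(t)‖ = ∞
    (hexpl : ∀ n ω, σ n ω < T →
      ∀ M : ℝ, ∃ᶠ t in nhdsWithin (σ n ω) (Set.Iio (σ n ω)), M < ‖X n t ω‖)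
    (hexpli : ∀ ω, σi ω < T →
      ∀ M : ℝ, ∃ᶠ t in nhdsWithin (σi ω) (Set.Iio (σi ω)), M < ‖Xi t ω‖)
    -- the stopping times ρ_n^{(r)} = inf { t ∈ (0, σ_n) : ‖X_n(t)‖ > r }, inf ∅ := T
    (ρ : ℕ → ℝ → Ω → ℝ) (ρi : ℝ → Ω → ℝ)
    (hρ : ∀ n r ω, ρ n r ω = sInf ({t : ℝ | t ∈ Set.Ioo 0 (σ n ω) ∧ r < ‖X n t ω‖} ∪ {T}))
    (hρi : ∀ r ω, ρi r ω = sInf ({t : ℝ | t ∈ Set.Ioo 0 (σi ω) ∧ r < ‖Xi t ω‖} ∪ {T}))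
    -- the globally defined processes X_n^{(r)} (denoted Y n r) and X_∞^{(r)} (denoted Yi r)
    (Y : ℕ → ℝ → ℝ → Ω → E) (Yi : ℝ → ℝ → Ω → E)
    (hYmeas : ∀ n r, Measurable fun p : ℝ × Ω => Y n r p.1 p.2)
    (hYimeas : ∀ r, Measurable fun p : ℝ × Ω => Yi r p.1 p.2)
    (hYcont : ∀ n r ω, Continuous fun t => Y n r t ω)
    (hYicont : ∀ r ω, Continuous fun t => Yi r t ω)
    -- assumption (a)
    (ha : ∀ n r, 0 < r → ∀ᵐ ω ∂P, ∀ t ∈ Set.Icc 0 (ρ n r ω), Y n r t ω = X n t ω)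
    (hai : ∀ r, 0 < r → ∀ᵐ ω ∂P, ∀ t ∈ Set.Icc 0 (ρi r ω), Yi r t ω = Xi t ω)
    -- assumption (b): X_n^{(r)} → X_∞^{(r)} in L⁰(Ω; C([0,T]; E))
    (hb : ∀ r, 0 < r → TendstoInMeasure P
      (fun n ω => ⨆ t : Set.Icc (0:ℝ) T, ‖Y n r (t : ℝ) ω - Yi r (t : ℝ) ω‖)
      atTop (fun _ => (0 : ℝ)))    :
    ∀ n : ℕ → ℕ, StrictMono n → ∃ k : ℕ → ℕ, StrictMono k ∧ ∀ᵐ ω ∂P,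
      Tendsto (fun r : ℝ => liminf (fun j => ρ (n (k j)) r ω) atTop) atTop (nhds (σi ω)) :=
  stmt_6_general P T σ σi hσmem hσimem X Xi hXcont hXicont hexpl hexpli ρ ρi hρ hρi Y Yi hYcont
    hYicont ha hai hb
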